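/- For three first-order differential operators L₁, L₂, L₃, the composition expands as L₃ ⋄ L₂ ⋄ L₁ = L₃ • L₂ • L₁ + L₃ • (L₂ ∘ L₁) + L₂ • (L₃ ∘ L₁) + (L₃ ∘ L₂) • L₁ + (L₃ ⋄ L₂) ∘ L₁. -/

import Mathlib

open Finsupp

/-- The space of linear differential operators in `n` variables (with polynomial
coefficients over `ℂ`): a formal finite sum `Σ_α u_α ∂^α`. -/
abbrev Diff (n : ℕ) := (Fin n →₀ ℕ) →₀ MvPolynomial (Fin n) ℂ

/-- The operator `∂^α = ∂₁^{α₁} ⋯ ∂ₙ^{αₙ}` acting on coefficient functions. -/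
noncomputable def Dop {n : ℕ} (α : Fin n →₀ ℕ) :
    Module.End ℂ (MvPolynomial (Fin n) ℂ) :=
  (List.ofFn fun i : Fin n => ((MvPolynomial.pderiv i).toLinearMap) ^ (α i)).prod

/-- White multiplication: `(u ∂^α) ∘ (v ∂^β) = u ∂^α(v) ∂^β`, extended bilinearly. -/
noncomputable def white {n : ℕ} (X Y : Diff n) : Diff n :=
  X.sum fun α u => Y.sum fun β v => Finsupp.single β (u * Dop α v)

/-- Black multiplication: `(u ∂^α) • (v ∂^β) = u v ∂^{α+β}`, extended bilinearly. -/
noncomputable def black {n : ℕ} (X Y : Diff n) : Diff n :=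
  X.sum fun α u => Y.sum fun β v => Finsupp.single (α + β) (u * v)

/-- Composition of differential operators:
`(u ∂^α) ⋄ (v ∂^β) = Σ_{γ ≤ α} binom(α,γ) u ∂^γ(v) ∂^{α+β-γ}`, extended bilinearly. -/
noncomputable def diam {n : ℕ} (X Y : Diff n) : Diff n :=
  X.sum fun α u => Y.sum fun β v =>
    ∑ γ ∈ Finset.Iic α,
      Finsupp.single (α + β - γ) (((∏ i, ((α i).choose (γ i)) : ℕ) : ℂ) • (u * Dop γ v))

/-- A differential operator is of first order (a vector field) if it has the
form `Σ_i u_i ∂_i`, i.e. every multi-index in its support has total degree 1. -/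
def IsVect {n : ℕ} (X : Diff n) : Prop :=
  ∀ α ∈ X.support, (α.sum fun _ k => k) = 1

/-- The identity differential operator `1·∂^0`. -/
noncomputable def unitD {n : ℕ} : Diff n := Finsupp.single 0 1

/-- Composition (`⋄`-)power `L^m = L ⋄ ⋯ ⋄ L`. -/
noncomputable def dpow {n : ℕ} (L : Diff n) : ℕ → Diff n
  | 0 => unitD
  | m + 1 => diam L (dpow L m)

/-- Black power `X^{•k} = X • ⋯ • X`. -/
noncomputable def bpow {n : ℕ} (X : Diff n) : ℕ → Diff n
  | 0 => unitD
  | k + 1 => black X (bpow X k)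

/-!
For a vector field `Z` the binomial sum defining `Z ⋄ Y` only has the terms `γ = 0` and `γ = α`,
so `Z ⋄ Y = Z • Y + Z ∘ Y`. By the Leibniz rule for `∂ᵢ`, `Z ∘ -` is a derivation for `•`, and
`Z ∘ (X ∘ Y) = (Z ∘ X) ∘ Y + (Z • X) ∘ Y`. Expanding `L₃ ⋄ (L₂ ⋄ L₁)` with these three rules and
biadditivity gives the identity.
-/

theorem MvPolynomial.pderiv_pderiv_comm {R σ : Type*} [CommSemiring R] (i j : σ)
    (p : MvPolynomial σ R) : pderiv i (pderiv j p) = pderiv j (pderiv i p) := by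
  classical
  induction p using MvPolynomial.induction_on with
  | C a => simp
  | add p q hp hq => simp [hp, hq]
  | mul_X p k hp =>
    simp only [pderiv_mul, pderiv_X, map_add, hp, Pi.single_apply]
    split_ifs <;> simp only [pderiv_one, map_zero, mul_zero, mul_one, add_zero, add_right_comm]

theorem MvPolynomial.commute_pderiv {R σ : Type*} [CommSemiring R] (i j : σ) :
    Commute (pderiv (R := R) i).toLinearMap (pderiv (R := R) j).toLinearMap :=
  LinearMap.ext (pderiv_pderiv_comm i j)

theorem Finsupp.Iic_single_one {ι : Type*} [DecidableEq ι] (i : ι) :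
    Finset.Iic (single i 1) = {0, single i 1} := by
  ext γ
  simp only [Finset.mem_Iic, Finset.mem_insert, Finset.mem_singleton]
  refine ⟨fun h => ?_, by rintro (rfl | rfl) <;> simp⟩
  have hγ : γ = single i (γ i) :=
    eq_single_iff.2 ⟨(support_mono h).trans support_single_subset, rfl⟩
  have : γ i ≤ 1 := by simpa using h i
  interval_cases h : γ i <;> rw [hγ] <;> simp

theorem MvPolynomial.pairwise_commute_pderiv_pow {R σ : Type*} [CommSemiring R] (s : Finset σ)
    (α β : σ →₀ ℕ) :
    (s : Set σ).Pairwise fun i j =>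
      Commute ((pderiv (R := R) i).toLinearMap ^ α i) ((pderiv j).toLinearMap ^ β j) :=
  fun i _ j _ _ => (commute_pderiv i j).pow_pow _ _

section Dop

variable {n : ℕ}

open MvPolynomial

theorem Dop_eq_noncommProd (α : Fin n →₀ ℕ) :
    Dop α = Finset.univ.noncommProd (fun i => (pderiv i).toLinearMap ^ α i)
      (pairwise_commute_pderiv_pow _ α α) := by
  simp only [Finset.noncommProd, Fin.univ_val_map, Multiset.noncommProd_coe, Dop]

theorem Dop_zero : Dop (0 : Fin n →₀ ℕ) = 1 := by
  simp only [Dop_eq_noncommProd, Finsupp.coe_zero, Pi.zero_apply, pow_zero]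
  exact Finset.noncommProd_eq_pow_card _ _ _ 1 (fun _ _ => rfl) |>.trans (one_pow _)

theorem Dop_add (α β : Fin n →₀ ℕ) : Dop (α + β) = Dop α * Dop β := by
  simp only [Dop_eq_noncommProd, Finsupp.coe_add, Pi.add_apply, pow_add]
  exact Finset.noncommProd_mul_distrib _ _ _ _ (pairwise_commute_pderiv_pow _ β α)

theorem Dop_single (i : Fin n) : Dop (single i 1) = (pderiv i).toLinearMap := by
  rw [Dop_eq_noncommProd, ← Finset.mul_noncommProd_erase _ (Finset.mem_univ i), single_eq_same,
    pow_one]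
  convert mul_one (pderiv i).toLinearMap
  refine (Finset.noncommProd_eq_pow_card _ _ _ 1 fun j hj => ?_).trans (one_pow _)
  rw [single_eq_of_ne (Finset.ne_of_mem_erase hj), pow_zero]

end Dop

section Operations

variable {n : ℕ}

@[simp]
theorem white_single_single (α β : Fin n →₀ ℕ) (u v : MvPolynomial (Fin n) ℂ) :
    white (single α u) (single β v) = single β (u * Dop α v) := by
  simp [white]

@[simp]
theorem black_single_single (α β : Fin n →₀ ℕ) (u v : MvPolynomial (Fin n) ℂ) :
    black (single α u) (single β v) = single (α + β) (u * v) := by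
  simp [black]

@[simp]
theorem white_zero_left (Y : Diff n) : white 0 Y = 0 := sum_zero_index

@[simp]
theorem white_zero_right (X : Diff n) : white X 0 = 0 := by simp [white]

@[simp]
theorem black_zero_left (Y : Diff n) : black 0 Y = 0 := sum_zero_index

@[simp]
theorem black_zero_right (X : Diff n) : black X 0 = 0 := by simp [black]

theorem white_add_left (X X' Y : Diff n) : white (X + X') Y = white X Y + white X' Y :=
  sum_add_index' (by simp) fun _ _ _ => by simp [add_mul, single_add, sum_add]

theorem white_add_right (X Y Y' : Diff n) : white X (Y + Y') = white X Y + white X Y' := by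
  simp only [white, ← sum_add]
  exact sum_congr fun _ _ => sum_add_index' (by simp) fun _ _ _ => by simp [mul_add, single_add]

theorem black_add_left (X X' Y : Diff n) : black (X + X') Y = black X Y + black X' Y :=
  sum_add_index' (by simp) fun _ _ _ => by simp [add_mul, single_add, sum_add]

theorem black_add_right (X Y Y' : Diff n) : black X (Y + Y') = black X Y + black X Y' := by
  simp only [black, ← sum_add]
  exact sum_congr fun _ _ => sum_add_index' (by simp) fun _ _ _ => by simp [mul_add, single_add]

end Operations

namespace IsVect

variable {n : ℕ}

@[elab_as_elim]
theorem induction {p : Diff n → Prop} {Z : Diff n} (hZ : IsVect Z) (zero : p 0)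
    (add : ∀ X Y, p X → p Y → p (X + Y)) (single_one : ∀ i u, p (single (single i 1) u)) :
    p Z := by
  rw [← Z.sum_single]
  refine Finset.sum_induction _ p add zero fun α hα => ?_
  obtain ⟨i, rfl⟩ := (sum_eq_one_iff α).1 (hZ α hα)
  exact single_one i _

theorem diam_eq_black_add_white {Z : Diff n} (hZ : IsVect Z) (Y : Diff n) :
    diam Z Y = black Z Y + white Z Y := by
  rw [diam, black, white, ← sum_add]
  refine sum_congr fun α hα => ?_
  obtain ⟨i, rfl⟩ := (sum_eq_one_iff α).1 (hZ α hα)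
  rw [← sum_add]
  refine sum_congr fun β _ => ?_
  rw [Iic_single_one, Finset.sum_pair (single_ne_zero.2 one_ne_zero).symm]
  simp [Dop_zero]

theorem white_black {Z : Diff n} (hZ : IsVect Z) (X Y : Diff n) :
    white Z (black X Y) = black (white Z X) Y + black X (white Z Y) := by
  refine hZ.induction (by simp) (fun Z Z' h h' => ?_) fun i u => ?_
  · simp only [white_add_left, black_add_left, black_add_right, h, h']
    abel
  induction X using Finsupp.induction_linear with
  | zero => simp
  | add X X' h h' =>
    simp only [black_add_left, white_add_right, h, h']
    abel
  | single β v =>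
    induction Y using Finsupp.induction_linear with
    | zero => simp
    | add Y Y' h h' =>
      simp only [black_add_right, white_add_right, h, h']
      abel
    | single δ w =>
      simp only [white_single_single, black_single_single, Dop_single, ← single_add]
      congr 1
      simp only [Derivation.coeFn_coe, MvPolynomial.pderiv_mul]
      ring

theorem white_white {Z : Diff n} (hZ : IsVect Z) (X Y : Diff n) :
    white Z (white X Y) = white (white Z X) Y + white (black Z X) Y := by
  refine hZ.induction (by simp) (fun Z Z' h h' => ?_) fun i u => ?_
  · simp only [white_add_left, black_add_left, h, h']
    abel
  induction X using Finsupp.induction_linear with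
  | zero => simp
  | add X X' h h' =>
    simp only [white_add_left, white_add_right, black_add_right, h, h']
    abel
  | single β v =>
    induction Y using Finsupp.induction_linear with
    | zero => simp
    | add Y Y' h h' =>
      simp only [white_add_right, h, h']
      abel
    | single δ w =>
      simp only [white_single_single, black_single_single, Dop_add, Dop_single, ← single_add]
      congr 1
      simp only [Module.End.mul_apply, Derivation.coeFn_coe, MvPolynomial.pderiv_mul]
      ring

end IsVect

theorem comp_three_general {n : ℕ} (L₁ L₂ L₃ : Diff n)
    (h₂ : IsVect L₂) (h₃ : IsVect L₃) :
    diam L₃ (diam L₂ L₁) =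
      black L₃ (black L₂ L₁) + black L₃ (white L₂ L₁) + black L₂ (white L₃ L₁) +
        black (white L₃ L₂) L₁ + white (diam L₃ L₂) L₁ := by
  simp only [h₃.diam_eq_black_add_white, h₂.diam_eq_black_add_white, black_add_right,
    white_add_right, white_add_left, h₃.white_black, h₃.white_white]
  abel

/-- `L₃ ⋄ L₂ ⋄ L₁ = L₃•L₂•L₁ + L₃•(L₂∘L₁) + L₂•(L₃∘L₁)
 + (L₃∘L₂)•L₁ + (L₃⋄L₂)∘L₁`. -/
theorem comp_three {n : ℕ} (L₁ L₂ L₃ : Diff n)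
    (h₁ : IsVect L₁) (h₂ : IsVect L₂) (h₃ : IsVect L₃) :
    diam L₃ (diam L₂ L₁) =
      black L₃ (black L₂ L₁) + black L₃ (white L₂ L₁) + black L₂ (white L₃ L₁) +
        black (white L₃ L₂) L₁ + white (diam L₃ L₂) L₁ :=
  comp_three_general L₁ L₂ L₃ h₂ h₃
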